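/- arXiv:2006.03666 — 3 statements merged into one kernel-verified Lean document; each statement's English description precedes it below -/
import Mathlib

section
/- For every natural number d, the value ⌈2·√d⌉ (i.e. Nat.ceil (2 * Real.sqrt d)) is the least natural number k for which there exists a 1D vector sequence of length k from rest to rest with displacement d. Formally: IsLeast {k : ℕ | ∃ v : Fin k → ℤ, (k > 0 → |v 0| ≤ 1 ∧ v ⟨k-1,_⟩ = 0) ∧ (∀ i, |v (i+1) - v i| ≤ 1) ∧ (∑ i, v i = d)} ⌈2·√d⌉. -/
/-- A 1D vector sequence of length `k` from rest to rest with displacement `D`: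
if `k > 0` then `|v 0| ≤ 1` and `v (k-1) = 0`; consecutive vectors differ by at
most one unit; and the vectors sum to `D`. -/
def IsVecSeq (k : ℕ) (D : ℤ) (v : Fin k → ℤ) : Prop :=
  (∀ h : 0 < k, |v ⟨0, h⟩| ≤ 1 ∧ v ⟨k - 1, Nat.sub_lt h one_pos⟩ = 0) ∧
  (∀ (i : ℕ) (h : i + 1 < k), |v ⟨i + 1, h⟩ - v ⟨i, by omega⟩| ≤ 1) ∧
  (∑ i, v i = D)

open Finset

/-- ceiling characterization -/
lemma ceil_sqrt_le_iff (d k : ℕ) : ⌈2 * Real.sqrt d⌉₊ ≤ k ↔ 4 * d ≤ k ^ 2 := by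
  rw [Nat.ceil_le]
  have h4 : (2 : ℝ) * Real.sqrt d = Real.sqrt (4 * d) := by
    rw [show (4:ℝ) * d = 2^2 * d by ring, Real.sqrt_mul (by positivity), Real.sqrt_sq (by norm_num)]
  rw [h4, Real.sqrt_le_iff]
  constructor
  · rintro ⟨-, h⟩
    exact_mod_cast h
  · intro h
    exact ⟨by positivity, by exact_mod_cast h⟩

lemma gaussA (q : ℕ) : (∑ i ∈ Finset.range q, i) + q + ∑ j ∈ Finset.range q, j = q * q := by
  induction q with
  | zero => simp
  | succ q ih =>
      rw [Finset.sum_range_succ]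
      have h : (q+1) * (q+1) = q * q + 2 * q + 1 := by ring
      linarith [ih, h]

lemma gaussB (q : ℕ) :
    (∑ i ∈ Finset.range q, i) + q + ∑ j ∈ Finset.range (q + 1), j = q * (q + 1) := by
  rw [Finset.sum_range_succ]
  have h : q * (q + 1) = q * q + q := by ring
  linarith [gaussA q, h]

lemma sum_min_eq (n q : ℕ) (h1 : 2 * q ≤ n) (h2 : n ≤ 2 * q + 1) :
    ∑ i ∈ Finset.range n, min (i + 1) (n - 1 - i) = q * (n - q) := by
  have hqn : q ≤ n := by omega
  rw [Finset.range_eq_Ico, ← Finset.sum_Ico_consecutive _ (Nat.zero_le q) hqn]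
  have e1 : ∑ i ∈ Finset.Ico 0 q, min (i + 1) (n - 1 - i)
      = (∑ i ∈ Finset.range q, i) + q := by
    rw [← Finset.range_eq_Ico]
    rw [show (∑ i ∈ Finset.range q, i) + q = ∑ i ∈ Finset.range q, (i + 1) by
      rw [Finset.sum_add_distrib]; simp]
    apply Finset.sum_congr rfl
    intro i hi
    simp only [Finset.mem_range] at hi
    omega
  have e2 : ∑ i ∈ Finset.Ico q n, min (i + 1) (n - 1 - i)
      = ∑ j ∈ Finset.range (n - q), j := by
    rw [Finset.sum_Ico_eq_sum_range]
    rw [← Finset.sum_range_reflect (fun j => j) (n - q)]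
    apply Finset.sum_congr rfl
    intro j hj
    simp only [Finset.mem_range] at hj
    omega
  rw [e1, e2]
  rcases (by omega : n = 2 * q ∨ n = 2 * q + 1) with h | h <;> subst h
  · rw [show 2 * q - q = q from by omega]
    exact gaussA q
  · rw [show 2 * q + 1 - q = q + 1 from by omega]
    exact gaussB q

/-- Upper bound on entries of a vec seq. -/
lemma vecseq_entry_le {k : ℕ} {D : ℤ} {v : Fin k → ℤ} (hv : IsVecSeq k D v) :
    ∀ (i : ℕ) (h : i < k), v ⟨i, h⟩ ≤ (min (i + 1) (k - 1 - i) : ℕ) := by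
  obtain ⟨hend, hstep, -⟩ := hv
  -- proof-irrelevant accessor
  set u : ℕ → ℤ := fun i => if h : i < k then v ⟨i, h⟩ else 0 with hu
  have huv : ∀ (i : ℕ) (h : i < k), v ⟨i, h⟩ = u i := by
    intro i h; simp [hu, h]
  have hstep' : ∀ i : ℕ, i + 1 < k → u (i + 1) - u i ≤ 1 ∧ -1 ≤ u (i + 1) - u i := by
    intro i h
    have hs := abs_le.mp (hstep i h)
    rw [huv (i+1) h, huv i (by omega)] at hs
    exact ⟨hs.2, hs.1⟩
  -- forward bound : u i ≤ i + 1
  have fwd : ∀ i : ℕ, i < k → u i ≤ (i : ℤ) + 1 := by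
    intro i
    induction i with
    | zero => intro h
              have := abs_le.mp (hend (by omega)).1
              rw [huv 0 (by omega)] at this
              simpa using this.2
    | succ i ih =>
        intro h
        have h1 : i < k := by omega
        have hs := hstep' i h
        have := ih h1
        push_cast
        omega
  -- backward bound : u (k-1-j) ≤ j
  have bwd : ∀ j : ℕ, 0 < k → u (k - 1 - j) ≤ (j : ℤ) := by
    intro j
    induction j with
    | zero => intro h0
              have := (hend h0).2
              rw [huv (k-1) (by omega)] at this
              simp only [Nat.sub_zero]
              omega
    | succ j ih =>
        intro h0
        by_cases hj : j + 1 ≤ k - 1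
        · have hlt : (k - 1 - (j + 1)) + 1 < k := by omega
          have hs := hstep' (k - 1 - (j + 1)) hlt
          have hb := ih h0
          have he : (k - 1 - (j+1)) + 1 = k - 1 - j := by omega
          rw [he] at hs
          push_cast
          omega
        · have hb := ih h0
          have he : k - 1 - (j + 1) = k - 1 - j := by omega
          rw [he]
          push_cast
          omega
  intro i h
  have h0 : 0 < k := by omega
  have hf := fwd i h
  have hbj := bwd (k - 1 - i) h0
  rw [show k - 1 - (k - 1 - i) = i from by omega] at hbj
  rw [huv i h, Nat.cast_min]
  refine le_min ?_ ?_
  · exact_mod_cast hf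
  · exact hbj

/-- Construction of an optimal sequence. -/
lemma vecseq_construct (d n : ℕ) (hd : 1 ≤ d) (h1 : 4 * d ≤ n ^ 2)
    (h2 : (n - 1) ^ 2 < 4 * d) : ∃ v : Fin n → ℤ, IsVecSeq n (d : ℤ) v := by
  have hn2 : 2 ≤ n := by
    by_contra hc
    push_neg at hc
    interval_cases n <;> omega
  obtain ⟨q, hq1, hq2⟩ : ∃ q, 2 * q ≤ n ∧ n ≤ 2 * q + 1 := ⟨n / 2, by omega, by omega⟩
  have hq0 : 1 ≤ q := by omega
  have hdS : d ≤ q * (n - q) := by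
    rcases (by omega : n = 2 * q ∨ n = 2 * q + 1) with h | h <;> subst h
    · rw [show 2 * q - q = q from by omega]
      have h4 : 4 * d ≤ 4 * (q * q) := by nlinarith
      exact Nat.le_of_mul_le_mul_left h4 (by norm_num)
    · rw [show 2 * q + 1 - q = q + 1 from by omega]
      have h4 : 4 * d < 4 * (q * (q + 1) + 1) := by nlinarith
      have := Nat.lt_of_mul_lt_mul_left h4
      omega
  have hSd : q * (n - q) < d + q := by
    rcases (by omega : n = 2 * q ∨ n = 2 * q + 1) with h | h <;> subst h
    · rw [show 2 * q - q = q from by omega]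
      obtain ⟨s, rfl⟩ : ∃ s, q = s + 1 := ⟨q - 1, by omega⟩
      rw [show 2 * (s + 1) - 1 = 2 * s + 1 from by omega] at h2
      have h4 : 4 * (s * (s + 1)) < 4 * d := by nlinarith
      have := Nat.lt_of_mul_lt_mul_left h4
      nlinarith
    · rw [show 2 * q + 1 - q = q + 1 from by omega]
      rw [show 2 * q + 1 - 1 = 2 * q from by omega] at h2
      have h4 : 4 * (q * q) < 4 * d := by nlinarith
      have := Nat.lt_of_mul_lt_mul_left h4
      nlinarith
  obtain ⟨S, hS⟩ : ∃ S, S = q * (n - q) := ⟨_, rfl⟩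
  rw [← hS] at hdS hSd
  refine ⟨fun i => ((min ((i : ℕ) + 1) (n - 1 - (i : ℕ)) : ℕ) : ℤ) -
    (if q - (S - d) ≤ (i : ℕ) ∧ (i : ℕ) < q then 1 else 0), ?_, ?_, ?_⟩
  · intro h
    constructor
    · simp only [Fin.val_mk]
      rw [abs_le]
      split_ifs with hif <;> constructor <;> omega
    · simp only [Fin.val_mk]
      rw [if_neg (by omega)]
      rw [show min (n - 1 + 1) (n - 1 - (n - 1)) = 0 from by omega]
      simp
  · intro i h
    simp only [Fin.val_mk]
    rw [abs_le]
    split_ifs with ha hb hb <;> constructor <;> omega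
  · rw [Fin.sum_univ_eq_sum_range (fun j => ((min (j + 1) (n - 1 - j) : ℕ) : ℤ) -
      (if q - (S - d) ≤ j ∧ j < q then 1 else 0)) n]
    rw [Finset.sum_sub_distrib]
    have hA : ∑ i ∈ Finset.range n, ((min (i + 1) (n - 1 - i) : ℕ) : ℤ)
        = ((q * (n - q) : ℕ) : ℤ) := by
      exact_mod_cast congrArg (Nat.cast : ℕ → ℤ) (sum_min_eq n q hq1 hq2)
    have hB : ∑ i ∈ Finset.range n, (if q - (S - d) ≤ i ∧ i < q then (1 : ℤ) else 0)
        = ((S - d : ℕ) : ℤ) := by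
      rw [Finset.sum_boole]
      norm_cast
      rw [show (Finset.range n).filter (fun i => q - (S - d) ≤ i ∧ i < q)
          = Finset.Ico (q - (S - d)) q from by
        ext a
        simp only [Finset.mem_filter, Finset.mem_range, Finset.mem_Ico]
        omega]
      rw [Nat.card_Ico]
      omega
    rw [hA, hB, ← hS]
    omega

/-- `⌈2√d⌉` is the least number of vectors of a 1D rest-to-rest vector sequence
with displacement `d`. -/
theorem vtsp_one_dim_cost (d : ℕ) :
    IsLeast {k : ℕ | ∃ v : Fin k → ℤ, IsVecSeq k (d : ℤ) v}
      ⌈2 * Real.sqrt d⌉₊ := by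
  constructor
  · -- membership
    by_cases hd0 : d = 0
    · subst hd0
      have hn : ⌈2 * Real.sqrt (0 : ℕ)⌉₊ = 0 := by
        simp
      simp only [Set.mem_setOf_eq]
      rw [hn]
      refine ⟨fun _ => 0, fun h => absurd h (by omega), fun i h => absurd h (by omega), by simp⟩
    · have h1 : 4 * d ≤ (⌈2 * Real.sqrt d⌉₊) ^ 2 := (ceil_sqrt_le_iff d _).mp le_rfl
      have hn1 : 1 ≤ ⌈2 * Real.sqrt d⌉₊ := by
        rcases Nat.eq_zero_or_pos ⌈2 * Real.sqrt d⌉₊ with h | h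
        · rw [h] at h1; omega
        · omega
      have h2 : (⌈2 * Real.sqrt d⌉₊ - 1) ^ 2 < 4 * d := by
        by_contra hc
        push_neg at hc
        have := (ceil_sqrt_le_iff d (⌈2 * Real.sqrt d⌉₊ - 1)).mpr hc
        omega
      exact vecseq_construct d _ (by omega) h1 h2
  · -- lower bound
    rintro k ⟨v, hv⟩
    rw [ceil_sqrt_le_iff]
    obtain ⟨q, hq⟩ : ∃ q, q = k / 2 := ⟨_, rfl⟩
    have hsum : (d : ℤ) = ∑ i, v i := hv.2.2.symm
    have hle : (d : ℤ) ≤ (q * (k - q) : ℕ) := by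
      rw [hsum]
      calc ∑ i, v i ≤ ∑ i : Fin k, ((min ((i:ℕ) + 1) (k - 1 - (i:ℕ)) : ℕ) : ℤ) := by
            apply Finset.sum_le_sum
            intro i _
            exact vecseq_entry_le hv i i.isLt
        _ = ((q * (k - q) : ℕ) : ℤ) := by
            rw [Fin.sum_univ_eq_sum_range (fun j => ((min (j + 1) (k - 1 - j) : ℕ) : ℤ)) k]
            exact_mod_cast congrArg (Nat.cast : ℕ → ℤ)
              (sum_min_eq k q (by omega) (by omega))
    have hd : d ≤ q * (k - q) := by exact_mod_cast hle
    rcases (by omega : k = 2 * q ∨ k = 2 * q + 1) with h | h <;> subst h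
    · rw [show 2 * q - q = q from by omega] at hd
      nlinarith [hd]
    · rw [show 2 * q + 1 - q = q + 1 from by omega] at hd
      nlinarith [hd]
end

section
/- For every natural number d, there exists a 1D vector sequence of length exactly ⌈2·√d⌉ from rest to rest with displacement d; that is, there exists v : Fin ⌈2·√d⌉ → ℤ with (⌈2·√d⌉ > 0 → |v 0| ≤ 1 ∧ v ⟨⌈2·√d⌉-1,_⟩ = 0), |v (i+1) - v i| ≤ 1 for all i, and ∑ i, v i = d. -/
lemma aux_seq : ∀ k D : ℕ, D ≤ k^2/4 →
    ∃ V : ℕ → ℤ, (0 < k → |V 0| ≤ 1 ∧ V (k-1) = 0) ∧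
      (∀ i, i+1 < k → |V (i+1) - V i| ≤ 1) ∧
      (∑ i ∈ Finset.range k, V i = D) := by
  intro k
  induction k using Nat.strong_induction_on with
  | _ k ih =>
    match k with
    | 0 =>
      intro D hD
      have : D = 0 := by simpa using hD
      subst this
      exact ⟨fun _ => 0, by simp, by simp, by simp⟩
    | 1 =>
      intro D hD
      have : D = 0 := by simpa using hD
      subst this
      exact ⟨fun _ => 0, by simp, by simp, by simp⟩
    | (n+2) =>
      intro D hD
      have hdiv : (n+2)^2/4 = n^2/4 + (n+1) := by
        have h4 : (n+2)^2 = n^2 + 4*(n+1) := by ring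
        rw [h4, Nat.add_mul_div_left _ _ (by norm_num : (0:ℕ) < 4)]
      rw [hdiv] at hD
      by_cases hc : n + 1 ≤ D
      · -- wrap a length-n sequence
        obtain ⟨W, hW1, hW2, hW3⟩ := ih n (by omega) (D - (n+1)) (by omega)
        refine ⟨fun i => if i = 0 then 1 else if i ≤ n then W (i-1) + 1 else 0, ?_, ?_, ?_⟩
        · intro _
          constructor
          · simp
          · have : ¬ (n+2-1 = 0) := by omega
            have h2 : ¬ (n+2-1 ≤ n) := by omega
            simp [this, h2]
        · intro i hi
          rcases Nat.eq_zero_or_pos i with h0 | h0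
          · subst h0
            rcases Nat.eq_zero_or_pos n with hn | hn
            · subst hn; norm_num
            · have hW0 := (hW1 hn).1
              have : (0:ℕ)+1 ≤ n := hn
              simp only [if_neg (by omega : ¬ (0+1 = 0)), if_pos this, if_pos rfl]
              simpa using hW0
          · rcases Nat.lt_or_ge (i+1) (n+1) with hlt | hge
            · -- both interior
              have h1 : ¬ (i+1 = 0) := by omega
              have h2 : (i+1 ≤ n) := by omega
              have h3 : ¬ (i = 0) := by omega
              have h4 : (i ≤ n) := by omega
              simp only [if_neg h1, if_pos h2, if_neg h3, if_pos h4]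
              have hW := hW2 (i-1) (by omega)
              have hieq : i - 1 + 1 = i := by omega
              rw [hieq] at hW
              have heq : |W (i+1-1) + 1 - (W (i-1) + 1)| = |W i - W (i-1)| := by
                have h5 : i + 1 - 1 = i := by omega
                rw [h5]; ring_nf
              rw [heq]; exact hW
            · -- i = n, last step
              have hin : n = i := by omega
              subst hin
              have h1 : ¬ (n+1 = 0) := by omega
              have h2 : ¬ (n+1 ≤ n) := by omega
              have h3 : ¬ (n = 0) := by omega
              have h4 : (n ≤ n) := le_refl n
              have hn : 0 < n := by omega
              have hWlast := (hW1 hn).2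
              simp only [if_neg h1, if_neg h2, if_neg h3, if_pos h4, hWlast]
              norm_num
        · rw [Finset.sum_range_succ, Finset.sum_range_succ']
          have hV0 : (if (0:ℕ) = 0 then (1:ℤ) else if 0 ≤ n then W (0-1) + 1 else 0) = 1 := by simp
          have hVlast : (if n+1 = 0 then (1:ℤ) else if n+1 ≤ n then W (n+1-1) + 1 else 0) = 0 := by
            simp [(by omega : ¬ (n+1 = 0)), (by omega : ¬ (n+1 ≤ n))]
          rw [hV0, hVlast]
          have hmid : ∀ i ∈ Finset.range n,
              (if i+1 = 0 then (1:ℤ) else if i+1 ≤ n then W (i+1-1) + 1 else 0) = W i + 1 := by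
            intro i hi
            simp only [Finset.mem_range] at hi
            simp [(by omega : ¬ (i+1 = 0)), (by omega : i+1 ≤ n)]
          rw [Finset.sum_congr rfl hmid, Finset.sum_add_distrib, hW3]
          simp only [Finset.sum_const, Finset.card_range, nsmul_eq_mul, mul_one]
          push_cast [Nat.cast_sub hc]
          ring
      · -- pad a length-(n+1) sequence with trailing zero
        have hb : D ≤ (n+1)^2/4 := by
          rw [Nat.le_div_iff_mul_le (by norm_num : (0:ℕ) < 4)]
          nlinarith [Nat.lt_of_not_le hc]
        obtain ⟨W, hW1, hW2, hW3⟩ := ih (n+1) (by omega) D hb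
        refine ⟨fun i => if i ≤ n then W i else 0, ?_, ?_, ?_⟩
        · intro _
          constructor
          · simpa [(by omega : (0:ℕ) ≤ n)] using (hW1 (by omega)).1
          · simp [(by omega : ¬ (n+2-1 ≤ n))]
        · intro i hi
          rcases Nat.lt_or_ge (i+1) (n+1) with hlt | hge
          · have h1 : i+1 ≤ n := by omega
            have h2 : i ≤ n := by omega
            simp only [if_pos h1, if_pos h2]
            exact hW2 i (by omega)
          · have hin : n = i := by omega
            subst hin
            have hWlast := (hW1 (by omega)).2
            simp only [Nat.add_sub_cancel] at hWlast
            simp [(by omega : ¬ (n+1 ≤ n)), hWlast]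
        · rw [Finset.sum_range_succ]
          have : ∀ i ∈ Finset.range (n+1), (if i ≤ n then W i else 0) = W i := by
            intro i hi; simp only [Finset.mem_range] at hi
            simp [(by omega : i ≤ n)]
          rw [Finset.sum_congr rfl this, hW3]
          simp [(by omega : ¬ (n+1 ≤ n))]

/-- There is a 1D rest-to-rest vector sequence with displacement `d` using
exactly `⌈2√d⌉` vectors. -/
theorem vtsp_one_dim_cost_upper (d : ℕ) :
    ∃ v : Fin ⌈2 * Real.sqrt d⌉₊ → ℤ, IsVecSeq ⌈2 * Real.sqrt d⌉₊ (d : ℤ) v := by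
  set k := ⌈2 * Real.sqrt d⌉₊ with hk
  have hdk : d ≤ k^2/4 := by
    have h1 : (2 * Real.sqrt d) ≤ (k : ℝ) := Nat.le_ceil _
    have hs : Real.sqrt d ^ 2 = d := Real.sq_sqrt (by positivity)
    have h2 : (4 * d : ℝ) ≤ (k:ℝ)^2 := by nlinarith [Real.sqrt_nonneg (d:ℝ)]
    have h3 : 4 * d ≤ k^2 := by exact_mod_cast h2
    rw [Nat.le_div_iff_mul_le (by norm_num : (0:ℕ) < 4)]
    omega
  obtain ⟨V, h1, h2, h3⟩ := aux_seq k d hdk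
  refine ⟨fun i => V i, ?_, ?_, ?_⟩
  · intro h; exact h1 h
  · intro i h; exact h2 i h
  · rw [Fin.sum_univ_eq_sum_range]; exact h3
end

section
/- Unidimensional cost with negative initial speed: let u : ℤ with u < 0 and let D : ℕ. Then the least k ≥ 1 for which there exists v : Fin k → ℤ with |v 0 - u| ≤ 1, |v (i+1) - v i| ≤ 1 for all i, v (k-1) = 0, and ∑ i, v i = D, is equal to (-u) + ⌈2·√(D + u·(u+1)/2)⌉. (That is, it is optimal to first decelerate to zero speed, which takes -u vectors and moves the vehicle back by u·(u+1)/2 units, and then cover the remaining distance D + u·(u+1)/2 from rest to rest at optimal cost ⌈2·√(D + u·(u+1)/2)⌉.) -/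
/-!
Every admissible sequence from speed `u = -m` of length `k` satisfies `v i ≤ u + 1 + i` (speed
rises by at most one per vector) and `v i ≤ k - 1 - i` (it must brake to rest at `k - 1`). The first
`m` vectors therefore contribute at most `-m(m-1)/2`, and the remaining `k - m` at most the tent
sum `⌊(k - m)²/4⌋`, so `4E ≤ (k - m)²` with `E = D + m(m-1)/2`, i.e. `k - m ≥ ⌈2√E⌉`.
Conversely, decelerating `u + 1, …, 0` and then following a tent profile of length `⌈2√E⌉`,
raised by one on a suitable prefix, attains this bound.
-/

open Finset

theorem sub_one_sq_div_four_add_div_two (t : ℤ) : (t - 1) ^ 2 / 4 + t / 2 = t ^ 2 / 4 := by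
  rcases Int.even_or_odd' t with ⟨s, rfl | rfl⟩ <;> ring_nf <;> omega

theorem Nat.ceil_two_mul_sqrt_le_iff (E : ℤ) (t : ℕ) :
    ⌈2 * √(E : ℝ)⌉₊ ≤ t ↔ 4 * E ≤ t ^ 2 := by
  rw [Nat.ceil_le, ← le_div_iff₀' two_pos, Real.sqrt_le_left (by positivity), div_pow,
    le_div_iff₀ (by norm_num), mul_comm]
  norm_cast

theorem sum_range_ite_lt {c t : ℕ} (hct : c ≤ t) :
    ∑ j ∈ range t, (if j < c then (1 : ℤ) else 0) = c := by
  have : {j ∈ range t | j < c} = range c := by ext; simp only [mem_filter, mem_range]; omega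
  rw [sum_boole, this, card_range]

theorem sum_range_min_eq (t : ℕ) :
    ∑ j ∈ range t, min (j : ℤ) (t - 1 - j) = ((t : ℤ) - 1) ^ 2 / 4 ∧
      ∑ j ∈ range t, min ((j : ℤ) + 1) (t - 1 - j) = (t : ℤ) ^ 2 / 4 := by
  induction t with
  | zero => simp
  | succ t ih =>
    push_cast
    have hsq : ((t : ℤ) + 1) ^ 2 = ((t : ℤ) - 1) ^ 2 + 4 * t := by ring
    constructor
    · have hshift : ∀ j ∈ range t, min ((j + 1 : ℕ) : ℤ) (t + 1 - 1 - (j + 1 : ℕ)) =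
          min ((j : ℤ) + 1) (t - 1 - j) := fun j _ => by push_cast; ring_nf
      rw [sum_range_succ', sum_congr rfl hshift, ih.2, add_sub_cancel_right]
      simp
    · have hshift : ∀ j ∈ range t, min ((j : ℤ) + 1) (t + 1 - 1 - j) =
          min (j : ℤ) (t - 1 - j) + 1 := fun j _ => by omega
      rw [sum_range_succ, sum_congr rfl hshift, sum_add_distrib, ih.1]
      simp only [sum_const, card_range, nsmul_eq_mul, mul_one]
      omega

theorem sum_range_neg_add_one_add (m : ℕ) :
    ∑ i ∈ range m, (-(m : ℤ) + 1 + i) = -(m * (m - 1) / 2) := by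
  have hgauss : ∑ i ∈ range m, (i : ℤ) = m * (m - 1) / 2 := by
    induction m with
    | zero => simp
    | succ n ih =>
      rw [sum_range_succ, ih]
      push_cast
      have : ((n : ℤ) + 1) * (n + 1 - 1) = n * (n - 1) + 2 * n := by ring
      omega
  obtain ⟨c, hc⟩ : Even ((m : ℤ) * (m - 1)) := by
    simpa [mul_comm] using Int.even_mul_succ_self ((m : ℤ) - 1)
  have : (m : ℤ) * (-m + 1) = -(m * (m - 1)) := by ring
  rw [sum_add_distrib, hgauss, sum_const, card_range, nsmul_eq_mul]
  omega

namespace Racetrack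

/-- Only `w 0, …, w (k - 1)` matter: sequences of length `k` are encoded as functions on `ℕ` to
avoid `Fin` arithmetic. -/
def IsAdmissible (u : ℤ) (k : ℕ) (w : ℕ → ℤ) : Prop :=
  (0 < k → |w 0 - u| ≤ 1 ∧ w (k - 1) = 0) ∧ ∀ i, i + 1 < k → |w (i + 1) - w i| ≤ 1

def Reaches (u : ℤ) (k : ℕ) (D : ℤ) : Prop :=
  ∃ w, IsAdmissible u k w ∧ ∑ i ∈ range k, w i = D

theorem exists_fin_iff_reaches (u D : ℤ) (k : ℕ) :
    (∃ v : Fin k → ℤ,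
        (∀ h : 0 < k, |v ⟨0, h⟩ - u| ≤ 1 ∧ v ⟨k - 1, Nat.sub_lt h one_pos⟩ = 0) ∧
        (∀ (i : ℕ) (h : i + 1 < k), |v ⟨i + 1, h⟩ - v ⟨i, by omega⟩| ≤ 1) ∧
        ∑ i, v i = D) ↔ Reaches u k D := by
  constructor
  · rintro ⟨v, hends, hsteps, hsum⟩
    refine ⟨fun i => if h : i < k then v ⟨i, h⟩ else 0, ⟨fun hk => ?_, fun i hi => ?_⟩, ?_⟩
    · simpa [hk] using hends hk
    · simpa [hi, Nat.lt_of_succ_lt hi] using hsteps i hi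
    · simp [← hsum, ← Fin.sum_univ_eq_sum_range]
  · rintro ⟨w, ⟨hends, hsteps⟩, hsum⟩
    exact ⟨fun i => w i, hends, hsteps, by rw [Fin.sum_univ_eq_sum_range (fun i => w i), hsum]⟩

namespace IsAdmissible

variable {u : ℤ} {k : ℕ} {w : ℕ → ℤ}

theorem abs_sub_le (hw : IsAdmissible u k w) {i j : ℕ} (hij : i ≤ j) (hj : j < k) :
    |w j - w i| ≤ j - i := by
  induction j, hij using Nat.le_induction with
  | base => simp
  | succ j hij ih =>
    have hstep := hw.2 j hj
    have := ih (by omega)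
    rw [abs_le] at *
    push_cast
    constructor <;> linarith

theorem le_min (hw : IsAdmissible u k w) {i : ℕ} (hi : i < k) :
    w i ≤ min (u + 1 + i) (k - 1 - i) := by
  obtain ⟨hstart, hend⟩ := hw.1 (by omega)
  have h₁ := abs_le.1 (hw.abs_sub_le (Nat.zero_le i) hi)
  have h₂ := abs_le.1 (hw.abs_sub_le (show i ≤ k - 1 by omega) (by omega))
  rw [abs_le] at hstart
  push_cast [Nat.cast_sub (Nat.one_le_of_lt hi)] at h₂
  omega

end IsAdmissible

theorem Reaches.le_length {m k : ℕ} {D : ℤ} (h : Reaches (-m) k D) (hk : 0 < k) : m ≤ k := by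
  obtain ⟨w, hw, -⟩ := h
  have := hw.le_min (Nat.sub_one_lt_of_lt hk)
  rw [(hw.1 hk).2] at this
  omega

theorem Reaches.four_mul_le_sq {m k : ℕ} {D : ℤ} (h : Reaches (-m) k D) (hk : 0 < k) :
    4 * (D + m * (m - 1) / 2) ≤ ((k : ℤ) - m) ^ 2 := by
  obtain ⟨t, rfl⟩ := Nat.exists_eq_add_of_le (h.le_length hk)
  obtain ⟨w, hw, rfl⟩ := h
  have hdecel : ∑ i ∈ range m, w i ≤ -(m * (m - 1) / 2) := by
    rw [← sum_range_neg_add_one_add]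
    exact sum_le_sum fun i hi =>
      (hw.le_min (by have := mem_range.1 hi; omega)).trans (min_le_left _ _)
  have hrest : ∑ j ∈ range t, w (m + j) ≤ (t : ℤ) ^ 2 / 4 := by
    rw [← (sum_range_min_eq t).2]
    refine sum_le_sum fun j hj => (hw.le_min (by have := mem_range.1 hj; omega)).trans ?_
    push_cast
    omega
  rw [sum_range_add]
  push_cast
  rw [add_sub_cancel_left]
  omega

theorem reaches_decelerate (m : ℕ) : Reaches (-m) m (-(m * (m - 1) / 2)) := by
  refine ⟨fun i => -m + 1 + i, ⟨fun hm => ?_, fun i _ => ?_⟩, sum_range_neg_add_one_add m⟩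
  · simp only [CharP.cast_eq_zero, add_zero, Nat.cast_pred hm]
    norm_num
  · simp

theorem reaches_zero_of_le_of_le (t : ℕ) (E : ℤ) (h₁ : ((t : ℤ) - 1) ^ 2 / 4 ≤ E)
    (h₂ : E ≤ (t : ℤ) ^ 2 / 4) : Reaches 0 t E := by
  set c := (E - ((t : ℤ) - 1) ^ 2 / 4).toNat
  have hc : 2 * c ≤ t := by have := sub_one_sq_div_four_add_div_two t; omega
  -- the tent `0, 1, 2, …, 1, 0` of sum `⌊(t - 1)²/4⌋`, raised by one on its first `c` entries
  refine ⟨fun j => min (j : ℤ) (t - 1 - j) + if j < c then 1 else 0,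
    ⟨fun ht => ?_, fun j hj => ?_⟩, ?_⟩
  · simp only [abs_le]
    split_ifs <;> push_cast [Nat.cast_sub ht] <;> omega
  · simp only [abs_le]
    split_ifs <;> push_cast <;> omega
  · rw [sum_add_distrib, (sum_range_min_eq t).1, sum_range_ite_lt (by omega)]
    omega

theorem Reaches.append {u D₁ D₂ : ℤ} {k₁ k₂ : ℕ} (h₁ : Reaches u k₁ D₁) (h₂ : Reaches 0 k₂ D₂)
    (hk₁ : 0 < k₁) : Reaches u (k₁ + k₂) (D₁ + D₂) := by
  obtain ⟨w₁, ⟨hends₁, hsteps₁⟩, rfl⟩ := h₁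
  obtain ⟨w₂, ⟨hends₂, hsteps₂⟩, rfl⟩ := h₂
  refine ⟨fun i => if i < k₁ then w₁ i else w₂ (i - k₁), ⟨fun _ => ?_, fun i hi => ?_⟩, ?_⟩
  · obtain ⟨hstart, hend⟩ := hends₁ hk₁
    refine ⟨by simpa [hk₁] using hstart, ?_⟩
    rcases Nat.eq_zero_or_pos k₂ with rfl | hk₂
    · simpa [hk₁] using hend
    · simpa [show ¬ k₁ + k₂ - 1 < k₁ by omega, show k₁ + k₂ - 1 - k₁ = k₂ - 1 by omega]
        using (hends₂ hk₂).2
  · rcases lt_trichotomy (i + 1) k₁ with h | h | h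
    · simpa [h, Nat.lt_of_succ_lt h] using hsteps₁ i h
    · obtain rfl : i = k₁ - 1 := by omega
      simpa [h, hk₁, (hends₁ hk₁).2] using (hends₂ (by omega)).1
    · simp only [show ¬ i + 1 < k₁ by omega, show ¬ i < k₁ by omega, if_false]
      have := hsteps₂ (i - k₁) (by omega)
      rwa [show i - k₁ + 1 = i + 1 - k₁ by omega] at this
  · rw [sum_range_add]
    congr 1
    · exact sum_congr rfl fun i hi => if_pos (mem_range.1 hi)
    · simp

end Racetrack

/-- Unidimensional cost with negative initial speed `u < 0`: the least number
of vectors needed to cover displacement `D` and end at rest is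
`(-u) + ⌈2√(D + u(u+1)/2)⌉`: first decelerate to rest (`-u` vectors, moving
back by `u(u+1)/2` units), then cover `D + u(u+1)/2` at optimal rest-to-rest
cost. -/
theorem vtsp_one_dim_cost_negative_speed (u : ℤ) (hu : u < 0) (D : ℕ) :
    IsLeast {k : ℕ | 1 ≤ k ∧ ∃ v : Fin k → ℤ,
        (∀ h : 0 < k, |v ⟨0, h⟩ - u| ≤ 1 ∧ v ⟨k - 1, Nat.sub_lt h one_pos⟩ = 0) ∧
        (∀ (i : ℕ) (h : i + 1 < k), |v ⟨i + 1, h⟩ - v ⟨i, by omega⟩| ≤ 1) ∧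
        (∑ i, v i = (D : ℤ))}
      ((-u).toNat + ⌈2 * Real.sqrt (((D : ℤ) + u * (u + 1) / 2 : ℤ) : ℝ)⌉₊) := by
  obtain ⟨m, rfl⟩ : ∃ m : ℕ, u = -m := ⟨(-u).toNat, by omega⟩
  have hm : 0 < m := by omega
  have hE : (D : ℤ) + -(m : ℤ) * (-m + 1) / 2 = D + m * (m - 1) / 2 := by ring_nf
  simp only [Racetrack.exists_fin_iff_reaches, neg_neg, Int.toNat_natCast, hE]
  set E : ℤ := D + m * (m - 1) / 2
  set T := ⌈2 * √(E : ℝ)⌉₊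
  have hT (s : ℕ) : T ≤ s ↔ 4 * E ≤ s ^ 2 := Nat.ceil_two_mul_sqrt_le_iff E s
  have hE₀ : 0 ≤ E := by
    have : 0 ≤ (m : ℤ) * (m - 1) := mul_nonneg (by omega) (by omega)
    omega
  refine ⟨⟨by omega, ?_⟩, fun k ⟨hk, hreach⟩ => ?_⟩
  · have hT₁ : ((T : ℤ) - 1) ^ 2 / 4 ≤ E := by
      rcases Nat.eq_zero_or_pos T with hT₀ | hT₀
      · simpa [hT₀] using hE₀
      · have := (hT (T - 1)).not.1 (by omega)
        push_cast [Nat.cast_sub hT₀] at this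
        omega
    have hT₂ : E ≤ (T : ℤ) ^ 2 / 4 := by
      have := (hT T).1 le_rfl
      omega
    convert (Racetrack.reaches_decelerate m).append
      (Racetrack.reaches_zero_of_le_of_le T E hT₁ hT₂) hm using 1
    omega
  · have hmk := hreach.le_length (by omega)
    have := (hT (k - m)).2 (by push_cast [Nat.cast_sub hmk]; exact hreach.four_mul_le_sq (by omega))
    omega
end
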